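/- Assume 0 < π0 < 1 and π1, π2, π3 > 0. The fixed point (L_ss, L_ss) is globally asymptotically attracting for trajectories that remain in Ω: if L = (L1, L2) : [0, ∞) → ℝ² is a differentiable solution of the system L1' = F1(L1,L2), L2' = F2(L1,L2) with L(t) ∈ Ω for all t ≥ 0, then L(t) → (L_ss, L_ss) as t → ∞. -/

import Mathlib

/-!
In the coordinates `s = L1 + L2`, `d = L1 - L2` use `V = (s - 2 L_ss)² + K d²` with
`K = 2 π0 π3 / π1`. Because `L_ss` is the nonnegative root of
`π0 π3 L² + (1 + π0 π2 + π1 / 2) L = (1 - π0) / 2`, the sum `F1 + F2` is `-J` times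
`(s - 2 L_ss) (2 + π1 + 2 π0 π2 + π0 π3 (s + 2 L_ss)) + π0 π3 d²`, while
`F1 - F2 = -π1 J d`. Together with `J ≥ 1 / (1 + π2 + π3)` on `Ω` this gives `V' ≤ -λ V`
for `λ = min 2 π1 / (1 + π2 + π3)`, so `V e^{λ t}` is nonincreasing, `V → 0`, and the
trajectory converges to `(L_ss, L_ss)`.
-/

open Filter Topology

noncomputable section

/-- The flux `J(L1, L2)`. -/
def J (π2 π3 L1 L2 : ℝ) : ℝ :=
  1 / (1 + π2 * (L1 + L2) + π3 * (L1 ^ 2 + L2 ^ 2))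

/-- The first component of the vector field. -/
def F1 (π0 π1 π2 π3 L1 L2 : ℝ) : ℝ :=
  J π2 π3 L1 L2 * (1 - L1 - L2) - π0 - π1 * J π2 π3 L1 L2 * L1

/-- The second component of the vector field. -/
def F2 (π0 π1 π2 π3 L1 L2 : ℝ) : ℝ :=
  J π2 π3 L1 L2 * (1 - L1 - L2) - π0 - π1 * J π2 π3 L1 L2 * L2

/-- The domain `Ω`. -/
def Omega : Set (ℝ × ℝ) := {p | 0 ≤ p.1 ∧ 0 ≤ p.2 ∧ p.1 + p.2 ≤ 1}

/-- Steady-state length `L_ss`. -/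
def Lss (π0 π1 π2 π3 : ℝ) : ℝ :=
  ((1 + π0 * π2 + π1 / 2) / (2 * π0 * π3)) *
    (Real.sqrt (1 + 2 * (1 - π0) * π0 * π3 / (1 + π0 * π2 + π1 / 2) ^ 2) - 1)

theorem mul_sq_add_mul_eq_of_sqrt {a b c : ℝ} (ha : a ≠ 0) (hb : b ≠ 0)
    (h : 0 ≤ 1 + 4 * a * c / b ^ 2) :
    a * (b / (2 * a) * (√(1 + 4 * a * c / b ^ 2) - 1)) ^ 2
      + b * (b / (2 * a) * (√(1 + 4 * a * c / b ^ 2) - 1)) = c := by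
  have hr := Real.sq_sqrt h
  set r := √(1 + 4 * a * c / b ^ 2)
  calc _ = b ^ 2 / (4 * a) * (r ^ 2 - 1) := by field_simp; ring
    _ = c := by rw [hr]; field_simp; ring

theorem le_mul_exp_of_hasDerivAt_le_mul {V V' : ℝ → ℝ} {c : ℝ}
    (hV : ∀ t, 0 ≤ t → HasDerivAt V (V' t) t) (hle : ∀ t, 0 ≤ t → V' t ≤ c * V t)
    {t : ℝ} (ht : 0 ≤ t) : V t ≤ V 0 * Real.exp (c * t) := by
  set W : ℝ → ℝ := fun s => V s * Real.exp (-(c * s))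
  have hW : ∀ s, 0 ≤ s → HasDerivAt W ((V' s - c * V s) * Real.exp (-(c * s))) s := by
    intro s hs
    have he : HasDerivAt (fun s => Real.exp (-(c * s))) (Real.exp (-(c * s)) * -c) s := by
      simpa using ((hasDerivAt_id s).const_mul c).neg.exp
    exact ((hV s hs).mul he).congr_deriv (by ring)
  have hanti : AntitoneOn W (Set.Ici 0) := by
    refine antitoneOn_of_hasDerivWithinAt_nonpos (convex_Ici 0)
      (fun s hs => (hW s hs).continuousAt.continuousWithinAt)
      (fun s hs => (hW s (interior_subset hs)).hasDerivWithinAt) fun s hs => ?_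
    have hs : 0 ≤ s := interior_subset hs
    exact mul_nonpos_of_nonpos_of_nonneg (by linarith [hle s hs]) (Real.exp_pos _).le
  have hWt : W t ≤ V 0 := by simpa [W] using hanti Set.self_mem_Ici ht ht
  calc V t = W t * Real.exp (c * t) := by simp [W, mul_assoc, ← Real.exp_add]
    _ ≤ V 0 * Real.exp (c * t) := by gcongr

theorem tendsto_zero_of_hasDerivAt_le_neg_mul {V V' : ℝ → ℝ} {c : ℝ} (hc : 0 < c)
    (hV0 : ∀ t, 0 ≤ t → 0 ≤ V t) (hV : ∀ t, 0 ≤ t → HasDerivAt V (V' t) t)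
    (hle : ∀ t, 0 ≤ t → V' t ≤ -c * V t) : Tendsto V atTop (𝓝 0) := by
  have hexp : Tendsto (fun t => V 0 * Real.exp (-c * t)) atTop (𝓝 0) := by
    have hlin : Tendsto (fun t : ℝ => -c * t) atTop atBot :=
      tendsto_id.const_mul_atTop_of_neg (neg_neg_of_pos hc)
    simpa using (Real.tendsto_exp_atBot.comp hlin).const_mul (V 0)
  refine tendsto_of_tendsto_of_tendsto_of_le_of_le' tendsto_const_nhds hexp ?_ ?_
  · filter_upwards [eventually_ge_atTop 0] with t ht using hV0 t ht
  · filter_upwards [eventually_ge_atTop 0] with t ht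
    using le_mul_exp_of_hasDerivAt_le_mul hV hle ht

theorem tendsto_zero_of_tendsto_sq {α : Type*} {l : Filter α} {f : α → ℝ}
    (h : Tendsto (fun t => f t ^ 2) l (𝓝 0)) : Tendsto f l (𝓝 0) :=
  (tendsto_zero_iff_abs_tendsto_zero f).2 <| by
    simpa [Function.comp_def, Real.sqrt_sq_eq_abs] using h.sqrt

def lyapunov (L K x y : ℝ) : ℝ := (x + y - 2 * L) ^ 2 + K * (x - y) ^ 2

theorem lyapunov_nonneg {K : ℝ} (hK : 0 ≤ K) (L x y : ℝ) : 0 ≤ lyapunov L K x y := by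
  unfold lyapunov; positivity

theorem hasDerivAt_lyapunov {L K a b t : ℝ} {x y : ℝ → ℝ} (hx : HasDerivAt x a t)
    (hy : HasDerivAt y b t) :
    HasDerivAt (fun s => lyapunov L K (x s) (y s))
      (2 * (x t + y t - 2 * L) * (a + b) + 2 * K * (x t - y t) * (a - b)) t := by
  have hsum := ((hx.fun_add hy).sub_const (2 * L)).fun_pow 2
  have hdiff := ((hx.fun_sub hy).fun_pow 2).const_mul K
  exact (hsum.fun_add hdiff).congr_deriv (by push_cast; ring)

theorem tendsto_prod_of_tendsto_lyapunov {α : Type*} {l : Filter α} {x y : α → ℝ}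
    {c K : ℝ} (hK : 0 < K) (h : Tendsto (fun t => lyapunov c K (x t) (y t)) l (𝓝 0)) :
    Tendsto (fun t => (x t, y t)) l (𝓝 (c, c)) := by
  have hsum : Tendsto (fun t => x t + y t - 2 * c) l (𝓝 0) := by
    refine tendsto_zero_of_tendsto_sq (tendsto_of_tendsto_of_tendsto_of_le_of_le
      tendsto_const_nhds h (fun t => sq_nonneg _) fun t => ?_)
    have := mul_nonneg hK.le (sq_nonneg (x t - y t))
    unfold lyapunov; linarith
  have hdiff : Tendsto (fun t => x t - y t) l (𝓝 0) := by
    refine tendsto_zero_of_tendsto_sq (tendsto_of_tendsto_of_tendsto_of_le_of_le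
      tendsto_const_nhds (by simpa using h.div_const K) (fun t => sq_nonneg _) fun t => ?_)
    rw [le_div_iff₀ hK]
    have := sq_nonneg (x t + y t - 2 * c)
    unfold lyapunov; linarith
  have hx := ((hsum.add hdiff).div_const 2).const_add c
  have hy := ((hsum.sub hdiff).div_const 2).const_add c
  simp only [add_zero, sub_zero, zero_div] at hx hy
  exact (hx.congr fun t => by ring).prodMk_nhds (hy.congr fun t => by ring)

section

variable {π0 π1 π2 π3 : ℝ}

theorem Lss_quadratic (hπ0 : 0 < π0) (hπ0' : π0 ≤ 1) (hπ1 : 0 < π1) (hπ2 : 0 < π2)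
    (hπ3 : 0 < π3) :
    π0 * π3 * Lss π0 π1 π2 π3 ^ 2 + (1 + π0 * π2 + π1 / 2) * Lss π0 π1 π2 π3
      = (1 - π0) / 2 := by
  have h := mul_sq_add_mul_eq_of_sqrt (a := π0 * π3) (b := 1 + π0 * π2 + π1 / 2)
    (c := (1 - π0) / 2) (by positivity) (by positivity) ?_
  · convert h using 3 <;> unfold Lss <;> ring_nf
  · have : 0 ≤ 4 * (π0 * π3) * ((1 - π0) / 2) := by
      have := sub_nonneg.2 hπ0'; positivity
    positivity

theorem Lss_nonneg (hπ0 : 0 < π0) (hπ0' : π0 ≤ 1) (hπ1 : 0 < π1) (hπ2 : 0 < π2)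
    (hπ3 : 0 < π3) : 0 ≤ Lss π0 π1 π2 π3 := by
  have : 0 ≤ 2 * (1 - π0) * π0 * π3 / (1 + π0 * π2 + π1 / 2) ^ 2 := by
    have := sub_nonneg.2 hπ0'; positivity
  exact mul_nonneg (by positivity) (sub_nonneg.2 (Real.one_le_sqrt.2 (by linarith)))

theorem two_mul_Lss_le_one (hπ0 : 0 < π0) (hπ0' : π0 ≤ 1) (hπ1 : 0 < π1) (hπ2 : 0 < π2)
    (hπ3 : 0 < π3) : 2 * Lss π0 π1 π2 π3 ≤ 1 := by
  have hq := Lss_quadratic hπ0 hπ0' hπ1 hπ2 hπ3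
  have h0 := Lss_nonneg hπ0 hπ0' hπ1 hπ2 hπ3
  nlinarith [mul_pos hπ0 hπ3, mul_pos hπ0 hπ2]

theorem one_div_le_J (hπ2 : 0 ≤ π2) (hπ3 : 0 ≤ π3) {x y : ℝ} (h : (x, y) ∈ Omega) :
    1 / (1 + π2 + π3) ≤ J π2 π3 x y := by
  obtain ⟨hx, hy, hxy⟩ : 0 ≤ x ∧ 0 ≤ y ∧ x + y ≤ 1 := h
  have hsq : x ^ 2 + y ^ 2 ≤ 1 := by nlinarith
  exact one_div_le_one_div_of_le (by positivity) (by nlinarith)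

theorem F1_sub_F2 (x y : ℝ) :
    F1 π0 π1 π2 π3 x y - F2 π0 π1 π2 π3 x y = -(π1 * J π2 π3 x y * (x - y)) := by
  unfold F1 F2; ring

theorem F1_add_F2 {L x y : ℝ}
    (hL : π0 * π3 * L ^ 2 + (1 + π0 * π2 + π1 / 2) * L = (1 - π0) / 2)
    (hD : 1 + π2 * (x + y) + π3 * (x ^ 2 + y ^ 2) ≠ 0) :
    F1 π0 π1 π2 π3 x y + F2 π0 π1 π2 π3 x y = -(J π2 π3 x y *
      ((x + y - 2 * L) * (2 * (1 + π0 * π2 + π1 / 2) + π0 * π3 * (x + y + 2 * L))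
        + π0 * π3 * (x - y) ^ 2)) := by
  unfold F1 F2 J
  field_simp
  linear_combination (-4) * hL

theorem lyapunov_deriv_le (hπ0 : 0 < π0) (hπ1 : 0 < π1) (hπ2 : 0 < π2) (hπ3 : 0 < π3)
    {L K x y : ℝ} (hL : π0 * π3 * L ^ 2 + (1 + π0 * π2 + π1 / 2) * L = (1 - π0) / 2)
    (hL0 : 0 ≤ L) (hL1 : 2 * L ≤ 1) (hK : K * π1 = 2 * π0 * π3) (h : (x, y) ∈ Omega) :
    2 * (x + y - 2 * L) * (F1 π0 π1 π2 π3 x y + F2 π0 π1 π2 π3 x y)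
        + 2 * K * (x - y) * (F1 π0 π1 π2 π3 x y - F2 π0 π1 π2 π3 x y)
      ≤ -(min 2 π1 / (1 + π2 + π3)) * lyapunov L K x y := by
  have hJ := one_div_le_J hπ2.le hπ3.le h
  obtain ⟨hx, hy, hxy⟩ : 0 ≤ x ∧ 0 ≤ y ∧ x + y ≤ 1 := h
  have hK0 : 0 ≤ K := by nlinarith [mul_pos hπ0 hπ3]
  obtain ⟨m, hm⟩ : ∃ m, min 2 π1 = m := ⟨_, rfl⟩
  have hm2 : m ≤ 2 := hm ▸ min_le_left _ _
  have hm1 : m ≤ π1 := hm ▸ min_le_right _ _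
  have hm0 : 0 ≤ m := hm ▸ le_min zero_le_two hπ1.le
  have hπ03 : 0 < π0 * π3 := mul_pos hπ0 hπ3
  -- `B` is `-V' / J`: thanks to `K π1 = 2 π0 π3` the coefficient of `d²` is
  -- `2 π0 π3 (s - 2L + 2)`, which is positive because `2L ≤ 1`.
  obtain ⟨B, hB⟩ : ∃ B, B =
      2 * (x + y - 2 * L) ^ 2 * (2 * (1 + π0 * π2 + π1 / 2) + π0 * π3 * (x + y + 2 * L))
        + 2 * π0 * π3 * (x - y) ^ 2 * (x + y - 2 * L + 2) := ⟨_, rfl⟩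
  have hderiv : 2 * (x + y - 2 * L) * (F1 π0 π1 π2 π3 x y + F2 π0 π1 π2 π3 x y)
      + 2 * K * (x - y) * (F1 π0 π1 π2 π3 x y - F2 π0 π1 π2 π3 x y)
        = -(J π2 π3 x y * B) := by
    rw [hB, F1_add_F2 hL (by positivity), F1_sub_F2]
    linear_combination (-2) * J π2 π3 x y * (x - y) ^ 2 * hK
  have hVB : m * lyapunov L K x y ≤ B := by
    have hsum : m ≤ 2 * (2 * (1 + π0 * π2 + π1 / 2) + π0 * π3 * (x + y + 2 * L)) := by
      nlinarith [mul_pos hπ0 hπ2, mul_nonneg hπ03.le (by linarith : 0 ≤ x + y + 2 * L)]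
    have hdiff : m * K ≤ 2 * π0 * π3 * (x + y - 2 * L + 2) := by
      nlinarith [mul_nonneg hπ03.le (by linarith : 0 ≤ x + y - 2 * L + 1),
        mul_nonneg hK0 (sub_nonneg.2 hm1)]
    rw [lyapunov, hB]
    nlinarith [mul_le_mul_of_nonneg_left hsum (sq_nonneg (x + y - 2 * L)),
      mul_le_mul_of_nonneg_left hdiff (sq_nonneg (x - y))]
  rw [hm, hderiv]
  calc -(J π2 π3 x y * B)
    _ ≤ -(1 / (1 + π2 + π3) * (m * lyapunov L K x y)) :=
      neg_le_neg (mul_le_mul hJ hVB (mul_nonneg hm0 (lyapunov_nonneg hK0 ..))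
        (le_trans (by positivity) hJ))
    _ = _ := by ring

end

/-- `(L_ss, L_ss)` is globally asymptotically attracting for trajectories
remaining in `Ω`: every solution staying in `Ω` for `t ≥ 0` converges to it. -/
theorem global_asymptotic_stability (π0 π1 π2 π3 : ℝ)
    (hπ0 : 0 < π0) (hπ0' : π0 < 1) (hπ1 : 0 < π1) (hπ2 : 0 < π2) (hπ3 : 0 < π3)
    (L1 L2 : ℝ → ℝ)
    (hd1 : ∀ t : ℝ, 0 ≤ t → HasDerivAt L1 (F1 π0 π1 π2 π3 (L1 t) (L2 t)) t)
    (hd2 : ∀ t : ℝ, 0 ≤ t → HasDerivAt L2 (F2 π0 π1 π2 π3 (L1 t) (L2 t)) t)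
    (hΩ : ∀ t : ℝ, 0 ≤ t → (L1 t, L2 t) ∈ Omega) :
    Filter.Tendsto (fun t => (L1 t, L2 t)) Filter.atTop
      (nhds (Lss π0 π1 π2 π3, Lss π0 π1 π2 π3)) := by
  have hK : 0 < 2 * π0 * π3 / π1 := by positivity
  refine tendsto_prod_of_tendsto_lyapunov hK (tendsto_zero_of_hasDerivAt_le_neg_mul
    (c := min 2 π1 / (1 + π2 + π3)) (by positivity) (fun t _ => lyapunov_nonneg hK.le ..)
    (fun t ht => hasDerivAt_lyapunov (hd1 t ht) (hd2 t ht)) fun t ht => ?_)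
  exact lyapunov_deriv_le hπ0 hπ1 hπ2 hπ3 (Lss_quadratic hπ0 hπ0'.le hπ1 hπ2 hπ3)
    (Lss_nonneg hπ0 hπ0'.le hπ1 hπ2 hπ3) (two_mul_Lss_le_one hπ0 hπ0'.le hπ1 hπ2 hπ3)
    (div_mul_cancel₀ _ hπ1.ne') (hΩ t ht)
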